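/- arXiv:1905.13475 — 8 statements merged into one kernel-verified Lean document; each statement's English description precedes it below -/
import Mathlib

section
/- With the tetrahedron construction h built from a triangle t, the edge entry h(n,0,n) equals the tetrahedron trinomial transform b_n = Σ_{i=0}^{n} Σ_{j=0}^{i} T(n; j, n-i, i-j) · t(i,j). -/
def trinom (n p q r : ℕ) : ℕ := n.factorial / (p.factorial * q.factorial * r.factorial)

def H (t : ℕ → ℕ → ℝ) : ℕ → ℕ → ℕ → ℝ
  | i, j, 0 => t i j
  | i, j, k + 1 => H t (i - 1) j k + H t i j k + H t i (j + 1) k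

/-!
The recursion says that the layer `h(·,·,k+1)` is obtained from the layer `h(·,·,k)` by applying
`L + 1 + R`, where `L` and `R` shift the first index down and the second index up. These shifts
commute, so expanding `(L + 1 + R)^k` by the binomial theorem twice writes `h(i,j,k)` as a sum of
`t(i-p, j+r)` weighted by trinomial coefficients `k!/(p! r! (k-p-r)!)`; at `(n,0,n)` this is the
transform with the row index reversed.
-/

open Finset

theorem trinom_eq_choose_mul_choose {n a b c : ℕ} (h : a + b + c = n) :
    trinom n a b c = n.choose b * (n - b).choose a := by
  obtain rfl : c = n - b - a := by omega
  have hb := Nat.choose_mul_factorial_mul_factorial (show b ≤ n by omega)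
  have ha := Nat.choose_mul_factorial_mul_factorial (show a ≤ n - b by omega)
  refine Nat.div_eq_of_eq_mul_left (by positivity) ?_
  rw [← hb, ← ha]
  ring

theorem Commute.add_one_add_pow {R : Type*} [Semiring R] {a b : R} (h : Commute a b) (k : ℕ) :
    (a + 1 + b) ^ k = ∑ p ∈ range (k + 1), ∑ r ∈ range (k - p + 1),
      (k.choose p * (k - p).choose r) • (a ^ p * b ^ r) := by
  rw [add_assoc, ((Commute.one_right a).add_right h).add_pow]
  refine sum_congr rfl fun p _ => ?_
  rw [add_comm 1 b, (Commute.one_right b).add_pow, mul_sum, sum_mul]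
  refine sum_congr rfl fun r _ => ?_
  simp only [one_pow, mul_one, ← nsmul_eq_mul', mul_smul_comm, smul_smul]

namespace Tetrahedron

variable {R : Type*} [Semiring R]

def shiftFst : Module.End R (ℕ → ℕ → R) where
  toFun f i j := f (i - 1) j
  map_add' _ _ := rfl
  map_smul' _ _ := rfl

def shiftSnd : Module.End R (ℕ → ℕ → R) where
  toFun f i j := f i (j + 1)
  map_add' _ _ := rfl
  map_smul' _ _ := rfl

theorem commute_shiftFst_shiftSnd : Commute (shiftFst : Module.End R _) shiftSnd :=
  LinearMap.ext fun _ => rfl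

theorem shiftFst_pow_apply (p : ℕ) (f : ℕ → ℕ → R) (i j : ℕ) :
    (shiftFst ^ p) f i j = f (i - p) j := by
  induction p generalizing f with
  | zero => rfl
  | succ p ih => rw [pow_succ, Module.End.mul_apply, ih]; rfl

theorem shiftSnd_pow_apply (r : ℕ) (f : ℕ → ℕ → R) (i j : ℕ) :
    (shiftSnd ^ r) f i j = f i (j + r) := by
  induction r generalizing f with
  | zero => rfl
  | succ r ih => rw [pow_succ, Module.End.mul_apply, ih]; rfl

theorem H_eq_pow_apply (t : ℕ → ℕ → ℝ) (k : ℕ) :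
    (fun i j => H t i j k) = ((shiftFst + 1 + shiftSnd : Module.End ℝ _) ^ k) t := by
  induction k with
  | zero => rfl
  | succ k ih => rw [pow_succ', Module.End.mul_apply, ← ih]; rfl

theorem H_eq_sum (t : ℕ → ℕ → ℝ) (i j k : ℕ) :
    H t i j k = ∑ p ∈ range (k + 1), ∑ r ∈ range (k - p + 1),
      (k.choose p * (k - p).choose r : ℝ) * t (i - p) (j + r) := by
  rw [show H t i j k = _ from congrFun₂ (H_eq_pow_apply t k) i j,
    commute_shiftFst_shiftSnd.add_one_add_pow]
  simp [LinearMap.sum_apply, Finset.sum_apply, shiftFst_pow_apply, shiftSnd_pow_apply, mul_assoc]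

end Tetrahedron

open Tetrahedron in
theorem stmt_4 (t : ℕ → ℕ → ℝ) (n : ℕ) :
    H t n 0 n =
      ∑ i ∈ Finset.range (n + 1), ∑ j ∈ Finset.range (i + 1),
        (trinom n j (n - i) (i - j) : ℝ) * t i j := by
  rw [H_eq_sum, ← sum_range_reflect _ (n + 1)]
  refine sum_congr rfl fun i hi => ?_
  have hin : i ≤ n := Nat.lt_succ_iff.mp (mem_range.mp hi)
  rw [show n + 1 - 1 - i = n - i by omega, Nat.sub_sub_self hin]
  refine sum_congr rfl fun j hj => ?_
  have hji : j ≤ i := Nat.lt_succ_iff.mp (mem_range.mp hj)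
  rw [trinom_eq_choose_mul_choose (show j + (n - i) + (i - j) = n by omega),
    Nat.sub_sub_self hin, zero_add]
  push_cast
  rfl
end

section
/- Suppose the triangle t satisfies Pascal's rule t(i,j) = t(i-1,j-1) + t(i-1,j) for all 2 ≤ i and 1 ≤ j ≤ i-1. Then the tetrahedron h built from t satisfies h(i,j,k) = h(i-1,j-1,k) + h(i-1,j,k) for all 0 ≤ k ≤ i-2 and 1 ≤ j ≤ i-1-k. -/
theorem stmt_5 (t : ℕ → ℕ → ℝ)
    (hpascal : ∀ i j : ℕ, 2 ≤ i → 1 ≤ j → j ≤ i - 1 → t i j = t (i - 1) (j - 1) + t (i - 1) j)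
    (i j k : ℕ) (hk : k + 2 ≤ i) (hj1 : 1 ≤ j) (hj2 : j ≤ i - 1 - k) :
    H t i j k = H t (i - 1) (j - 1) k + H t (i - 1) j k := by
  induction k generalizing i j with
  | zero =>
    simp only [H]
    exact hpascal i j (by omega) hj1 (by omega)
  | succ k ih =>
    have h1 : H t (i - 1) j k = H t (i - 1 - 1) (j - 1) k + H t (i - 1 - 1) j k :=
      ih (i - 1) j (by omega) hj1 (by omega)
    have h2 : H t i j k = H t (i - 1) (j - 1) k + H t (i - 1) j k :=
      ih i j (by omega) hj1 (by omega)
    have h3 : H t i (j + 1) k = H t (i - 1) (j + 1 - 1) k + H t (i - 1) (j + 1) k :=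
      ih i (j + 1) (by omega) (by omega) (by omega)
    have hji : j + 1 - 1 = j := by omega
    have hjj : j - 1 + 1 = j := by omega
    simp only [H, h1, h2, h3, hji, hjj]
    ring
end

section
/- If the triangle t is symmetric, i.e., t(i,j) = t(i,i-j) for all 0 ≤ j ≤ i, then the tetrahedron h built from t satisfies h(i,j,k) = h(i, i-(j+k), k) for all 0 ≤ k ≤ i and 0 ≤ j ≤ i-k. -/
theorem stmt_6 (t : ℕ → ℕ → ℝ)
    (hsym : ∀ i j : ℕ, j ≤ i → t i j = t i (i - j))
    (i j k : ℕ) (hk : k ≤ i) (hj : j ≤ i - k) :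
    H t i j k = H t i (i - (j + k)) k := by
  induction k generalizing i j with
  | zero => simpa [H] using hsym i j (by omega)
  | succ k ih =>
    have hji : j + (k + 1) ≤ i := by omega
    simp only [H]
    rw [ih (i-1) j (by omega) (by omega), ih i j (by omega) (by omega),
      ih i (j+1) (by omega) (by omega)]
    have a1 : (i-1) - (j+k) = i - (j+(k+1)) := by omega
    have a2 : i - (j+k) = i - (j+(k+1)) + 1 := by omega
    have a3 : i - (j+1+k) = i - (j+(k+1)) := by omega
    rw [a1, a2, a3]; ring
end

section
/- Suppose t(i,0) = c for all i ≥ 0 and Pascal's rule holds for t. Let h be the tetrahedron built from t and set m = j + k + 1. Then for all fixed j, k and all i ≥ j+k, Σ_{ℓ=0}^{m} (-1)^ℓ C(m,ℓ) h(i+ℓ, j, k) = 0; i.e., the sequence {h(i,j,k)}_{i≥j+k} satisfies an m-th order homogeneous linear recurrence with binomial coefficients. -/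
/-!
Pascal's rule says that, from row `j + 1` on, the forward difference in `i` of column `j + 1` of
`t` is column `j`; as column `0` is constant, `Δ^(j+1)` annihilates column `j` from row `j` on.
Each level of the recursion for `h` either shifts `i` by one or moves to column `j + 1`, so by
induction on `k` the operator `Δ^(j+k+1)` annihilates `i ↦ h(i,j,k)` for `i ≥ j + k`. Expanding
`Δ^m` by the binomial theorem gives the stated sum, up to the sign `(-1)^m`.
-/

open Finset Function

section FwdDiff

variable {G : Type*} [AddCommGroup G]

lemma fwdDiff_iter_eqOn_Ici {f g : ℕ → G} {a : ℕ} (hfg : Set.EqOn f g (Set.Ici a)) (n : ℕ) :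
    Set.EqOn ((fwdDiff 1)^[n] f) ((fwdDiff 1)^[n] g) (Set.Ici a) := by
  intro y hy
  simp only [fwdDiff_iter_eq_sum_shift]
  refine sum_congr rfl fun ℓ _ => ?_
  rw [hfg (Set.mem_Ici.2 (le_add_right (Set.mem_Ici.1 hy)))]

lemma fwdDiff_iter_succ_eqOn_zero {f : ℕ → G} {n a : ℕ}
    (hf : Set.EqOn ((fwdDiff 1)^[n] f) 0 (Set.Ici a)) :
    Set.EqOn ((fwdDiff 1)^[n + 1] f) 0 (Set.Ici a) := by
  intro y hy
  rw [iterate_succ_apply', fwdDiff, hf hy, hf (Set.mem_Ici.2 (le_add_right (Set.mem_Ici.1 hy)))]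
  simp

lemma fwdDiff_iter_comp_pred (f : ℕ → G) (n y : ℕ) :
    (fwdDiff 1)^[n] (fun x => f (x - 1)) (y + 1) = (fwdDiff 1)^[n] f y := by
  simpa using (fwdDiff_iter_comp_add 1 (fun x => f (x - 1)) 1 n y).symm

lemma fwdDiff_iter_comp_pred_eqOn_zero {f : ℕ → G} {n a : ℕ}
    (hf : Set.EqOn ((fwdDiff 1)^[n] f) 0 (Set.Ici a)) :
    Set.EqOn ((fwdDiff 1)^[n] (fun x => f (x - 1))) 0 (Set.Ici (a + 1)) := by
  intro y hy
  obtain ⟨x, rfl⟩ : ∃ x, y = x + 1 := ⟨y - 1, by grind⟩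
  rw [fwdDiff_iter_comp_pred]
  exact hf (Set.mem_Ici.2 (by grind))

end FwdDiff

lemma sum_neg_one_pow_mul_choose_mul {R : Type*} [CommRing R] (f : ℕ → R) (n y : ℕ) :
    ∑ ℓ ∈ range (n + 1), (-1 : R) ^ ℓ * (n.choose ℓ : R) * f (y + ℓ) =
      (-1) ^ n * (fwdDiff 1)^[n] f y := by
  rw [fwdDiff_iter_eq_sum_shift, mul_sum]
  refine sum_congr rfl fun ℓ hℓ => ?_
  have hℓn : ℓ ≤ n := Nat.lt_succ_iff.1 (mem_range.1 hℓ)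
  have hsign : (-1 : R) ^ n * (-1) ^ (n - ℓ) = (-1) ^ ℓ := by
    rw [← pow_add, show n + (n - ℓ) = ℓ + 2 * (n - ℓ) by omega, pow_add, pow_mul]
    simp
  rw [zsmul_eq_mul, smul_eq_mul, mul_one]
  push_cast
  rw [← mul_assoc, ← mul_assoc, hsign]

section Tetrahedron

variable {t : ℕ → ℕ → ℝ} {c : ℝ}

lemma fwdDiff_column_succ
    (hpascal : ∀ i j : ℕ, 2 ≤ i → 1 ≤ j → j ≤ i - 1 → t i j = t (i - 1) (j - 1) + t (i - 1) j)
    (j : ℕ) : Set.EqOn (fwdDiff 1 (fun x => t x (j + 1))) (fun x => t x j) (Set.Ici (j + 1)) := by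
  intro x hx
  have := hpascal (x + 1) (j + 1) (by grind) (by omega) (by grind)
  simp only [fwdDiff, Nat.add_sub_cancel] at this ⊢
  rw [this, add_sub_cancel_right]

lemma fwdDiff_iter_column_eqOn_zero (hconst : ∀ i : ℕ, t i 0 = c)
    (hpascal : ∀ i j : ℕ, 2 ≤ i → 1 ≤ j → j ≤ i - 1 → t i j = t (i - 1) (j - 1) + t (i - 1) j)
    (j : ℕ) : Set.EqOn ((fwdDiff 1)^[j + 1] (fun x => t x j)) 0 (Set.Ici j) := by
  induction j with
  | zero => intro i _; simp [fwdDiff, hconst]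
  | succ j ih =>
    intro i hi
    rw [iterate_succ_apply, fwdDiff_iter_eqOn_Ici (fwdDiff_column_succ hpascal j) (j + 1) hi]
    exact ih (Set.mem_Ici.2 (by grind))

lemma fwdDiff_iter_H_eqOn_zero (hconst : ∀ i : ℕ, t i 0 = c)
    (hpascal : ∀ i j : ℕ, 2 ≤ i → 1 ≤ j → j ≤ i - 1 → t i j = t (i - 1) (j - 1) + t (i - 1) j)
    (k j : ℕ) : Set.EqOn ((fwdDiff 1)^[j + k + 1] (fun x => H t x j k)) 0 (Set.Ici (j + k)) := by
  induction k generalizing j with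
  | zero => exact fwdDiff_iter_column_eqOn_zero hconst hpascal j
  | succ k ih =>
    have hsplit : (fun x => H t x j (k + 1)) =
        (fun x => H t (x - 1) j k) + (fun x => H t x j k) + (fun x => H t x (j + 1) k) := rfl
    have hpred := fwdDiff_iter_comp_pred_eqOn_zero (fwdDiff_iter_succ_eqOn_zero (ih j))
    have hself := fwdDiff_iter_succ_eqOn_zero (ih j)
    have hnext := ih (j + 1)
    rw [show j + 1 + k = j + k + 1 by ring] at hnext
    intro x hx
    rw [show j + (k + 1) + 1 = j + k + 1 + 1 by ring, hsplit, fwdDiff_iter_add, fwdDiff_iter_add]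
    simp only [Pi.add_apply, hpred hx, hself (Set.Ici_subset_Ici.2 (by omega) hx), hnext hx,
      Pi.zero_apply, add_zero]

end Tetrahedron

theorem stmt_8 (t : ℕ → ℕ → ℝ) (c : ℝ)
    (hconst : ∀ i : ℕ, t i 0 = c)
    (hpascal : ∀ i j : ℕ, 2 ≤ i → 1 ≤ j → j ≤ i - 1 → t i j = t (i - 1) (j - 1) + t (i - 1) j)
    (j k i : ℕ) (hi : j + k ≤ i) :
    ∑ ℓ ∈ Finset.range (j + k + 2),
      (-1 : ℝ) ^ ℓ * ((j + k + 1).choose ℓ : ℝ) * H t (i + ℓ) j k = 0 := by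
  rw [sum_neg_one_pow_mul_choose_mul (fun x => H t x j k),
    fwdDiff_iter_H_eqOn_zero hconst hpascal k j hi, Pi.zero_apply, mul_zero]
end

section
/- The tetrahedron trinomial transform of Pascal's triangle equals the binomial transform of the central binomial coefficients: Σ_{i=0}^{n} Σ_{j=0}^{i} T(n; j, n-i, i-j) · C(i,j) = Σ_{ℓ=0}^{n} C(n,ℓ) · C(2ℓ,ℓ) for all n ≥ 0. -/
lemma trinom_eq_choose_mul_choose_s11 {n i j : ℕ} (hj : j ≤ i) (hi : i ≤ n) :
    trinom n j (n - i) (i - j) = n.choose i * i.choose j := by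
  have hfact : n.choose i * i.choose j * (j.factorial * (n - i).factorial * (i - j).factorial)
      = n.factorial := by
    rw [← Nat.choose_mul_factorial_mul_factorial hi,
      ← Nat.choose_mul_factorial_mul_factorial hj]
    ring
  rw [trinom, ← hfact, Nat.mul_div_cancel _ (by positivity)]

theorem stmt_11 (n : ℕ) :
    ∑ i ∈ Finset.range (n + 1), ∑ j ∈ Finset.range (i + 1),
        trinom n j (n - i) (i - j) * i.choose j =
      ∑ ℓ ∈ Finset.range (n + 1), n.choose ℓ * (2 * ℓ).choose ℓ := by
  refine Finset.sum_congr rfl fun i hi => ?_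
  rw [← Nat.sum_range_choose_sq, Finset.mul_sum]
  refine Finset.sum_congr rfl fun j hj => ?_
  rw [trinom_eq_choose_mul_choose_s11 (Finset.mem_range_succ_iff.mp hj)
    (Finset.mem_range_succ_iff.mp hi), sq, mul_assoc]
end

section
/- For all n ≥ 0, Σ_{i=0}^{n} Σ_{j=0}^{i} C(n,j) · C(n-j, n-i) · C(i,j) = Σ_{ℓ=0}^{n} C(n,ℓ) · C(2ℓ,ℓ). -/
/-
Choosing `j` of `n` and then `n - i` of the remaining `n - j` is the same as choosing `i` of `n`
and then `j` of those `i`, so the summand is `C(n,i) · C(i,j)²`; the inner sum over `j` is then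
Vandermonde's `∑ⱼ C(i,j)² = C(2i,i)`.
-/

theorem Nat.choose_mul_choose_sub_sub {n i j : ℕ} (hji : j ≤ i) (hin : i ≤ n) :
    n.choose j * (n - j).choose (n - i) = n.choose i * i.choose j := by
  rw [Nat.choose_mul hji, Nat.choose_symm_of_eq_add (a := n - i) (b := i - j) (by omega)]

theorem stmt_12 (n : ℕ) :
    ∑ i ∈ Finset.range (n + 1), ∑ j ∈ Finset.range (i + 1),
        n.choose j * (n - j).choose (n - i) * i.choose j =
      ∑ ℓ ∈ Finset.range (n + 1), n.choose ℓ * (2 * ℓ).choose ℓ := by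
  refine Finset.sum_congr rfl fun i hi => ?_
  have hin : i ≤ n := Nat.lt_succ_iff.mp (Finset.mem_range.mp hi)
  calc ∑ j ∈ Finset.range (i + 1), n.choose j * (n - j).choose (n - i) * i.choose j
      = ∑ j ∈ Finset.range (i + 1), n.choose i * i.choose j ^ 2 := by
        refine Finset.sum_congr rfl fun j hj => ?_
        have hji : j ≤ i := Nat.lt_succ_iff.mp (Finset.mem_range.mp hj)
        rw [Nat.choose_mul_choose_sub_sub hji hin]
        ring
    _ = n.choose i * (2 * i).choose i := by rw [← Finset.mul_sum, Nat.sum_range_choose_sq]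
end

section
/- For 0 ≤ k ≤ i and 0 ≤ j ≤ i-k, Σ_{r=0}^{k} Σ_{s=0}^{r} T(k; s, k-r, r-s) · C(i-k+r, j+s) = Σ_{ℓ=0}^{k} C(k,ℓ) · Σ_{s=0}^{ℓ} C(ℓ,s) · C(i+ℓ-k, j+s). -/
theorem trinom_eq_choose_mul_choose_s13 {k r s : ℕ} (hr : r ≤ k) (hs : s ≤ r) :
    trinom k s (k - r) (r - s) = k.choose r * r.choose s := by
  refine Nat.div_eq_of_eq_mul_left (by positivity) ?_
  calc k.factorial = k.choose r * r.factorial * (k - r).factorial :=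
        (Nat.choose_mul_factorial_mul_factorial hr).symm
    _ = k.choose r * (r.choose s * s.factorial * (r - s).factorial) * (k - r).factorial := by
        rw [Nat.choose_mul_factorial_mul_factorial hs]
    _ = k.choose r * r.choose s * (s.factorial * (k - r).factorial * (r - s).factorial) := by
        ring

theorem stmt_13_general (i j k : ℕ) (hk : k ≤ i) :
    ∑ r ∈ Finset.range (k + 1), ∑ s ∈ Finset.range (r + 1),
        trinom k s (k - r) (r - s) * (i - k + r).choose (j + s) =
      ∑ ℓ ∈ Finset.range (k + 1),
        k.choose ℓ * ∑ s ∈ Finset.range (ℓ + 1), ℓ.choose s * (i + ℓ - k).choose (j + s) := by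
  refine Finset.sum_congr rfl fun r hr => ?_
  rw [Finset.mul_sum, Nat.sub_add_comm hk]
  refine Finset.sum_congr rfl fun s hs => ?_
  rw [trinom_eq_choose_mul_choose_s13 (Finset.mem_range_succ_iff.mp hr)
    (Finset.mem_range_succ_iff.mp hs), mul_assoc]

theorem stmt_13 (i j k : ℕ) (hk : k ≤ i) (hj : j ≤ i - k) :
    ∑ r ∈ Finset.range (k + 1), ∑ s ∈ Finset.range (r + 1),
        trinom k s (k - r) (r - s) * (i - k + r).choose (j + s) =
      ∑ ℓ ∈ Finset.range (k + 1),
        k.choose ℓ * ∑ s ∈ Finset.range (ℓ + 1), ℓ.choose s * (i + ℓ - k).choose (j + s) :=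
  stmt_13_general i j k hk
end

section
/- Suppose t(i,j) satisfies t(i,0) = c for all i ≥ 0, Pascal's rule t(i,j)=t(i-1,j-1)+t(i-1,j) for 2 ≤ i, 1 ≤ j ≤ i-1, and boundary values t(i,i) = a_i for i ≥ 1 (with t(0,0)=c). Then for 1 ≤ j ≤ i-1, t(i,j) = c·Σ_{p=0}^{i-j-1} C(i-2-p, j-1) + Σ_{q=0}^{j-1} C(i-2-q, j-1-q)·a_{q+1}. -/
/-!
Write `i = n + 2`, `j = k + 1`. By the hockey-stick identity the coefficient of `c` is
`(n + 1).choose (k + 1)`, and the coefficients of the `a (q + 1)` form `diagSum a n k`. Both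
satisfy Pascal's rule in `(n, k)`, so the formula follows by induction on `n`. The diagonal
`k = n + 1` fits the same closed form, since `(n + 1).choose (n + 2) = 0` and
`diagSum a n (n + 1)` collapses to `a (n + 2)`; this lets the induction use the formula on the
diagonal like any other entry.
-/

open Finset

lemma sum_range_sub_choose {n k : ℕ} (hkn : k ≤ n) :
    ∑ p ∈ range (n - k + 1), (n - p).choose k = (n + 1).choose (k + 1) := by
  obtain ⟨m, rfl⟩ := Nat.exists_eq_add_of_le hkn
  rw [show k + m + 1 = m + k + 1 by omega, ← Nat.sum_range_add_choose, Nat.add_sub_cancel_left,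
    ← sum_range_reflect]
  refine sum_congr rfl fun p hp => ?_
  rw [mem_range] at hp
  congr 1
  omega

noncomputable def diagSum (a : ℕ → ℝ) (n k : ℕ) : ℝ :=
  ∑ q ∈ range (k + 1), ((n - q).choose (k - q) : ℝ) * a (q + 1)

lemma diagSum_zero_right (a : ℕ → ℝ) (n : ℕ) : diagSum a n 0 = a 1 := by
  simp [diagSum]

lemma diagSum_succ_self (a : ℕ → ℝ) (n : ℕ) : diagSum a n (n + 1) = a (n + 2) := by
  rw [diagSum, sum_range_succ, sum_eq_zero fun q hq => ?_]
  · simp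
  · rw [Nat.choose_eq_zero_of_lt (by rw [mem_range] at hq; omega), Nat.cast_zero, zero_mul]

lemma diagSum_succ_succ (a : ℕ → ℝ) {n k : ℕ} (hkn : k ≤ n) :
    diagSum a (n + 1) (k + 1) = diagSum a n k + diagSum a n (k + 1) := by
  have pascal : ∀ q ∈ range (k + 1),
      ((n + 1 - q).choose (k + 1 - q) : ℝ) * a (q + 1) =
        ((n - q).choose (k - q) : ℝ) * a (q + 1) +
          ((n - q).choose (k + 1 - q) : ℝ) * a (q + 1) := by
    intro q hq
    rw [mem_range] at hq
    rw [show n + 1 - q = n - q + 1 by omega, show k + 1 - q = k - q + 1 by omega,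
      Nat.choose_succ_succ]
    push_cast
    ring
  simp only [diagSum, sum_range_succ _ (k + 1), sum_congr rfl pascal, sum_add_distrib]
  simp only [Nat.reduceSubDiff, tsub_self, Nat.choose_zero_right, Nat.cast_one, one_mul]
  ring

lemma eq_choose_add_diagSum {t : ℕ → ℕ → ℝ} {c : ℝ} {a : ℕ → ℝ}
    (hconst : ∀ i : ℕ, t i 0 = c)
    (hpascal : ∀ i j : ℕ, 2 ≤ i → 1 ≤ j → j ≤ i - 1 → t i j = t (i - 1) (j - 1) + t (i - 1) j)
    (hdiag : ∀ i : ℕ, 1 ≤ i → t i i = a i) {n k : ℕ} (hkn : k ≤ n + 1) :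
    t (n + 2) (k + 1) = c * (n + 1).choose (k + 1) + diagSum a n k := by
  have diag (m : ℕ) : t (m + 2) (m + 2) = c * (m + 1).choose (m + 2) + diagSum a m (m + 1) := by
    rw [hdiag _ (by omega), Nat.choose_succ_self, diagSum_succ_self, Nat.cast_zero, mul_zero,
      zero_add]
  have step (m l : ℕ) (hlm : l ≤ m) : t (m + 2) (l + 1) = t (m + 1) l + t (m + 1) (l + 1) := by
    simpa using hpascal (m + 2) (l + 1) (by omega) (by omega) (by omega)
  induction n generalizing k with
  | zero =>
    obtain rfl | rfl : k = 0 ∨ k = 1 := by omega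
    · simp [step 0 0 le_rfl, hconst, hdiag, diagSum_zero_right]
    · exact diag 0
  | succ n ih =>
    obtain rfl | hlt := eq_or_lt_of_le hkn
    · exact diag (n + 1)
    rw [step (n + 1) k (by omega)]
    cases k with
    | zero =>
      rw [hconst, ih (by omega), diagSum_zero_right, diagSum_zero_right,
        Nat.choose_succ_succ' (n + 1), Nat.choose_zero_right]
      push_cast
      ring
    | succ k =>
      rw [ih (by omega), ih (by omega), diagSum_succ_succ a (by omega),
        Nat.choose_succ_succ' (n + 1)]
      push_cast
      ring

theorem stmt_17 (t : ℕ → ℕ → ℝ) (c : ℝ) (a : ℕ → ℝ)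
    (hconst : ∀ i : ℕ, t i 0 = c)
    (hpascal : ∀ i j : ℕ, 2 ≤ i → 1 ≤ j → j ≤ i - 1 → t i j = t (i - 1) (j - 1) + t (i - 1) j)
    (hdiag : ∀ i : ℕ, 1 ≤ i → t i i = a i)
    (i j : ℕ) (hj1 : 1 ≤ j) (hj2 : j ≤ i - 1) :
    t i j = c * ∑ p ∈ Finset.range (i - j), ((i - 2 - p).choose (j - 1) : ℝ) +
      ∑ q ∈ Finset.range j, ((i - 2 - q).choose (j - 1 - q) : ℝ) * a (q + 1) := by
  obtain ⟨k, rfl⟩ : ∃ k, j = k + 1 := ⟨j - 1, by omega⟩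
  obtain ⟨n, rfl⟩ : ∃ n, i = n + 2 := ⟨i - 2, by omega⟩
  have hkn : k ≤ n := by omega
  rw [eq_choose_add_diagSum hconst hpascal hdiag (by omega), diagSum, ← sum_range_sub_choose hkn,
    show n + 2 - (k + 1) = n - k + 1 by omega]
  simp only [Nat.add_sub_cancel, Nat.cast_sum]
end
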